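/- Let A be a real d×d matrix, B a real d×m matrix, a ∈ ℝᵈ, γ ∈ ℝᵐ, and let κ, ζ₂ be real numbers. For every integer k ≥ 0 and every 1 ≤ ℓ ≤ m, the ℝᵈ-component of the iterated bracket ℳᵏ(V_ℓ)(v,ψ) equals AᵏBe_ℓ for all (v,ψ) ∈ ℝᵈ × ℝ (where e_ℓ is the ℓ-th standard basis vector of ℝᵐ); that is, ℳᵏ(V_ℓ)(v,ψ) = (AᵏBe_ℓ, f(v,ψ)) for some smooth scalar function f. -/

import Mathlib

/-- Lie bracket of vector fields on `(Fin d → ℝ) × ℝ`: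
`[V,W](x) = DW(x)(V(x)) − DV(x)(W(x))`. -/
noncomputable def lieBr {d : ℕ} (V W : (Fin d → ℝ) × ℝ → (Fin d → ℝ) × ℝ) :
    (Fin d → ℝ) × ℝ → (Fin d → ℝ) × ℝ :=
  fun x => fderiv ℝ W x (V x) - fderiv ℝ V x (W x)

/-- The drift vector field `V₀(v,ψ) = (Av, −1 + (1 − κ² + ⟨a,v⟩)cos²ψ − ζ₂ sin 2ψ)`. -/
noncomputable def vfV0 {d : ℕ} (A : Matrix (Fin d) (Fin d) ℝ) (a : Fin d → ℝ)
    (κ ζ₂ : ℝ) : (Fin d → ℝ) × ℝ → (Fin d → ℝ) × ℝ :=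
  fun p => (A.mulVec p.1,
    -1 + (1 - κ ^ 2 + dotProduct a p.1) * Real.cos p.2 ^ 2
      - ζ₂ * Real.sin (2 * p.2))

/-- `ℳ(V) = [V, V₀]`. -/
noncomputable def vfM {d : ℕ} (A : Matrix (Fin d) (Fin d) ℝ) (a : Fin d → ℝ)
    (κ ζ₂ : ℝ) (V : (Fin d → ℝ) × ℝ → (Fin d → ℝ) × ℝ) :
    (Fin d → ℝ) × ℝ → (Fin d → ℝ) × ℝ :=
  lieBr V (vfV0 A a κ ζ₂)


section
variable {d : ℕ} (A : Matrix (Fin d) (Fin d) ℝ) (a : Fin d → ℝ) (κ ζ₂ : ℝ)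

noncomputable def L0 : ((Fin d → ℝ) × ℝ) →L[ℝ] (Fin d → ℝ) :=
  (Matrix.mulVecLin A).toContinuousLinearMap.comp (ContinuousLinearMap.fst ℝ (Fin d → ℝ) ℝ)

noncomputable def h0 : (Fin d → ℝ) × ℝ → ℝ :=
  fun p => -1 + (1 - κ ^ 2 + dotProduct a p.1) * Real.cos p.2 ^ 2
      - ζ₂ * Real.sin (2 * p.2)

lemma vfV0_eq : vfV0 A a κ ζ₂ = fun p => (L0 A p, h0 a κ ζ₂ p) := by
  funext p
  simp [vfV0, L0, h0]

lemma h0_smooth : ContDiff ℝ (⊤ : ℕ∞) (h0 a κ ζ₂ (d := d)) := by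
  unfold h0
  apply ContDiff.sub
  · apply ContDiff.add contDiff_const
    apply ContDiff.mul
    · apply ContDiff.add contDiff_const
      simp only [dotProduct]
      apply ContDiff.sum
      intro i _
      exact contDiff_const.mul (((ContinuousLinearMap.proj i : (Fin d → ℝ) →L[ℝ] ℝ).contDiff).comp contDiff_fst)
    · exact (Real.contDiff_cos.comp contDiff_snd).pow 2
  · exact contDiff_const.mul (Real.contDiff_sin.comp (contDiff_const.mul contDiff_snd))

lemma vfV0_smooth : ContDiff ℝ (⊤ : ℕ∞) (vfV0 A a κ ζ₂) := by
  rw [vfV0_eq]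
  exact (L0 A).contDiff.prodMk (h0_smooth a κ ζ₂)

lemma step (c : Fin d → ℝ) (f : (Fin d → ℝ) × ℝ → ℝ) (hf : ContDiff ℝ (⊤ : ℕ∞) f) :
    ∃ g : (Fin d → ℝ) × ℝ → ℝ, ContDiff ℝ (⊤ : ℕ∞) g ∧
      vfM A a κ ζ₂ (fun p => (c, f p)) = fun p => (A.mulVec c, g p) := by
  refine ⟨fun p => (fderiv ℝ (vfV0 A a κ ζ₂) p (c, f p)).2
      - fderiv ℝ f p (vfV0 A a κ ζ₂ p), ?_, ?_⟩
  · apply ContDiff.sub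
    · exact contDiff_snd.comp
        (((vfV0_smooth A a κ ζ₂).fderiv_right (by simp)).clm_apply
          (contDiff_const.prodMk hf))
    · exact (hf.fderiv_right (by simp)).clm_apply (vfV0_smooth A a κ ζ₂)
  · funext p
    have hV : HasFDerivAt (fun p : (Fin d → ℝ) × ℝ => (c, f p))
        ((0 : ((Fin d → ℝ) × ℝ) →L[ℝ] (Fin d → ℝ)).prod (fderiv ℝ f p)) p :=
      (hasFDerivAt_const c p).prodMk (hf.differentiable (by simp) p).hasFDerivAt
    have hV0 : HasFDerivAt (vfV0 A a κ ζ₂)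
        ((L0 A).prod (fderiv ℝ (h0 a κ ζ₂) p)) p := by
      rw [vfV0_eq]
      exact (L0 A).hasFDerivAt.prodMk
        ((h0_smooth a κ ζ₂).differentiable (by simp) p).hasFDerivAt
    have h1 : (fderiv ℝ (vfV0 A a κ ζ₂) p (c, f p)).1 = A.mulVec c := by
      rw [hV0.fderiv]; simp [L0]
    simp only [vfM, lieBr, hV.fderiv]
    apply Prod.ext
    · simpa using h1
    · simp
end

/-- For every `k ≥ 0` and `1 ≤ ℓ ≤ m`, the `ℝᵈ`-component of `ℳᵏ(V_ℓ)(v,ψ)` is the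
constant `AᵏBe_ℓ`; that is, `ℳᵏ(V_ℓ)(v,ψ) = (AᵏBe_ℓ, f(v,ψ))` for a smooth scalar `f`. -/
theorem iterated_bracket_first_component {d m : ℕ}
    (A : Matrix (Fin d) (Fin d) ℝ) (B : Matrix (Fin d) (Fin m) ℝ)
    (a : Fin d → ℝ) (γ : Fin m → ℝ) (κ ζ₂ : ℝ) (k : ℕ) (ℓ : Fin m) :
    ∃ f : (Fin d → ℝ) × ℝ → ℝ, ContDiff ℝ (⊤ : ℕ∞) f ∧
      ∀ p : (Fin d → ℝ) × ℝ,
        ((vfM A a κ ζ₂)^[k]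
            (fun q => ((fun i => B i ℓ), γ ℓ * Real.cos q.2 ^ 2))) p
          = ((A ^ k).mulVec (fun i => B i ℓ), f p) := by
  induction k with
  | zero =>
    refine ⟨fun q => γ ℓ * Real.cos q.2 ^ 2, ?_, ?_⟩
    · exact contDiff_const.mul ((Real.contDiff_cos.comp contDiff_snd).pow 2)
    · intro p; simp [Matrix.one_mulVec]
  | succ k ih =>
    obtain ⟨f, hf, hfun⟩ := ih
    have heq : ((vfM A a κ ζ₂)^[k]
        (fun q => ((fun i => B i ℓ), γ ℓ * Real.cos q.2 ^ 2)))
        = fun p => ((A ^ k).mulVec (fun i => B i ℓ), f p) := funext hfun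
    obtain ⟨g, hg, hgeq⟩ := step A a κ ζ₂ ((A ^ k).mulVec (fun i => B i ℓ)) f hf
    refine ⟨g, hg, ?_⟩
    intro p
    rw [Function.iterate_succ_apply', heq, hgeq]
    rw [pow_succ', Matrix.mulVec_mulVec]
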